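/- Let P be a polyomino whose complement graph Ḡ_P is chordal. Then P is simple, i.e., any two cells of ℤ² not belonging to P are joined by a path of adjacent cells none of which belongs to P. -/

import Mathlib

/-- A cell of the grid, identified with its lower-left corner. -/
abbrev Cell : Type := ℤ × ℤ

/-- Two cells are adjacent if they differ by `(±1,0)` or `(0,±1)`. -/
def Adjacent (c d : Cell) : Prop :=
  (c.1 = d.1 ∧ (c.2 = d.2 + 1 ∨ d.2 = c.2 + 1)) ∨
  (c.2 = d.2 ∧ (c.1 = d.1 + 1 ∨ d.1 = c.1 + 1))

/-- A polyomino: a finite nonempty set of cells, any two of which are joined by a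
path of adjacent cells inside the set. -/
def IsPolyomino (P : Finset Cell) : Prop :=
  P.Nonempty ∧ ∀ c ∈ P, ∀ d ∈ P,
    Relation.ReflTransGen (fun a b => Adjacent a b ∧ a ∈ P ∧ b ∈ P) c d

/-- A horizontal segment of consecutive cells in a row. -/
def IsHSeg (S : Finset Cell) : Prop :=
  ∃ y a b : ℤ, a ≤ b ∧ S = (Finset.Icc a b).image (fun x => (x, y))

/-- A vertical segment of consecutive cells in a column. -/
def IsVSeg (S : Finset Cell) : Prop :=
  ∃ x a b : ℤ, a ≤ b ∧ S = (Finset.Icc a b).image (fun y => (x, y))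

/-- A maximal horizontal cell interval of `P`. -/
def IsMaxHInterval (P I : Finset Cell) : Prop :=
  IsHSeg I ∧ I ⊆ P ∧ ∀ I', IsHSeg I' → I' ⊆ P → I ⊆ I' → I' = I

/-- A maximal vertical cell interval of `P`. -/
def IsMaxVInterval (P I : Finset Cell) : Prop :=
  IsVSeg I ∧ I ⊆ P ∧ ∀ I', IsVSeg I' → I' ⊆ P → I ⊆ I' → I' = I

/-- A maximal cell interval of `P`. -/
def IsMaxInterval (P I : Finset Cell) : Prop :=
  IsMaxHInterval P I ∨ IsMaxVInterval P I

/-- Two distinct cells of `P` attack each other if they lie in a common maximal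
cell interval of `P`. -/
def Attacks (P : Finset Cell) (c d : Cell) : Prop :=
  c ≠ d ∧ ∃ I, IsMaxInterval P I ∧ c ∈ I ∧ d ∈ I

/-- A set of pairwise non-attacking cells of `P` (a face of the rook complex). -/
def IsRookSet (P F : Finset Cell) : Prop :=
  F ⊆ P ∧ ∀ c ∈ F, ∀ d ∈ F, ¬ Attacks P c d

/-- A maximal set of pairwise non-attacking cells of `P` (a facet of the rook complex). -/
def IsMaxRookSet (P F : Finset Cell) : Prop :=
  IsRookSet P F ∧ ∀ G, IsRookSet P G → F ⊆ G → G = F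

/-- An interval `I` is embedded if some set `F` of pairwise non-attacking cells,
disjoint from `I`, attacks every cell of `I`. -/
def IsEmbedded (P I : Finset Cell) : Prop :=
  ∃ F : Finset Cell, IsRookSet P F ∧ F ∩ I = ∅ ∧ ∀ c ∈ I, ∃ f ∈ F, Attacks P f c

/-- A partition of `P`: pairwise disjoint maximal cell intervals whose union is `P`. -/
def IsPartition (P : Finset Cell) (A : Finset (Finset Cell)) : Prop :=
  (∀ I ∈ A, IsMaxInterval P I) ∧
  (∀ I ∈ A, ∀ J ∈ A, I ≠ J → Disjoint I J) ∧
  A.biUnion id = P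

/-- A super partition: a partition none of whose intervals is embedded. -/
def IsSuperPartition (P : Finset Cell) (A : Finset (Finset Cell)) : Prop :=
  IsPartition P A ∧ ∀ I ∈ A, ¬ IsEmbedded P I

/-- `P` is a square: a translate of the `n × n` block of cells for some `n ≥ 1`. -/
def IsSquareBlock (P : Finset Cell) : Prop :=
  ∃ a b n : ℤ, 1 ≤ n ∧ P = Finset.Icc a (a + n - 1) ×ˢ Finset.Icc b (b + n - 1)

/-- The graph `G_P` on the cells of `P` whose edges are the attacking pairs. -/
def GP (P : Finset Cell) : SimpleGraph {c : Cell // c ∈ P} where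
  Adj c d := Attacks P (c : Cell) (d : Cell)
  symm := ⟨by
    rintro c d ⟨hne, I, hI, hc, hd⟩
    exact ⟨hne.symm, I, hI, hd, hc⟩⟩
  loopless := ⟨by
    rintro c ⟨hne, -⟩
    exact hne rfl⟩

/-- The complement graph `Ḡ_P`. -/
def GBar (P : Finset Cell) : SimpleGraph {c : Cell // c ∈ P} := (GP P)ᶜ

/-- `G` has an induced cycle of length `n`: an injective map from `ZMod n`
whose image induces exactly the cycle adjacencies. -/
def HasInducedCycle {V : Type*} (G : SimpleGraph V) (n : ℕ) : Prop :=
  3 ≤ n ∧ ∃ f : ZMod n → V, Function.Injective f ∧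
    ∀ i j : ZMod n, G.Adj (f i) (f j) ↔ (i = j + 1 ∨ j = i + 1)

/-- A graph is chordal if it has no induced cycle of length at least 4. -/
def IsChordal {V : Type*} (G : SimpleGraph V) : Prop :=
  ∀ n, 4 ≤ n → ¬ HasInducedCycle G n

/-- `P` is simple: any two cells outside `P` are joined by a path of adjacent
cells outside `P`. -/
def IsSimple (P : Finset Cell) : Prop :=
  ∀ c d : Cell, c ∉ P → d ∉ P →
    Relation.ReflTransGen (fun a b => Adjacent a b ∧ a ∉ P ∧ b ∉ P) c d

/-- `P` is thin: it contains no four cells forming a `2 × 2` square. -/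
def IsThin (P : Finset Cell) : Prop :=
  ¬ ∃ a : Cell, ({a, (a.1 + 1, a.2), (a.1, a.2 + 1), (a.1 + 1, a.2 + 1)} : Finset Cell) ⊆ P

/-- A path of distinct cells of `P`, consecutive cells being adjacent. -/
def IsCellPath (P : Finset Cell) (l : List Cell) : Prop :=
  l.Nodup ∧ (∀ c ∈ l, c ∈ P) ∧ l.Chain' Adjacent

/-- The number of changes of direction of a path of cells: positions `k`
(with `1 ≤ k ≤ length - 2`) where the `(k-1)`-st and `(k+1)`-st cells differ
in both coordinates. -/
def dirChanges (l : List Cell) : ℕ :=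
  ((Finset.Ico 1 (l.length - 1)).filter (fun k =>
    (l.getD (k - 1) (0, 0)).1 ≠ (l.getD (k + 1) (0, 0)).1 ∧
    (l.getD (k - 1) (0, 0)).2 ≠ (l.getD (k + 1) (0, 0)).2)).card

/-- The eight rotations/reflections of the grid. -/
def dihedralMaps : List (Cell → Cell) :=
  [fun p => (p.1, p.2), fun p => (-p.2, p.1), fun p => (-p.1, -p.2), fun p => (p.2, -p.1),
   fun p => (p.2, p.1), fun p => (-p.1, p.2), fun p => (-p.2, -p.1), fun p => (p.1, -p.2)]

/-- `P` is obtained from `Q` by a translation, rotation or reflection of `ℤ²`. -/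
def CongruentTo (P Q : Finset Cell) : Prop :=
  ∃ g ∈ dihedralMaps, ∃ t : Cell, P = Q.image (fun p => g p + t)

/-- A brush polyomino with handle `J`. -/
def IsBrush (P J : Finset Cell) : Prop :=
  IsPolyomino P ∧ IsSimple P ∧ IsThin P ∧ IsMaxInterval P J ∧
  (∀ I, IsMaxInterval P I → 2 ≤ I.card → I ≠ J → (I ∩ J).Nonempty) ∧
  (∀ c ∈ P, c ∈ J ∨ ∃ I, IsMaxInterval P I ∧ 2 ≤ I.card ∧ c ∈ I)

/-- A short brush polyomino: a brush all of whose bristles have at most two cells. -/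
def IsShortBrush (P : Finset Cell) : Prop :=
  ∃ J, IsBrush P J ∧ ∀ I, IsMaxInterval P I → I ≠ J → I.card ≤ 2

/-- A pure brush polyomino: handle `J` of cardinality `d` together with `d`
pairwise disjoint bristles `I 0, …, I (d-1)` perpendicular to `J`, each meeting
`J`, whose union is `P`. -/
def IsPureBrush (P J : Finset Cell) (d : ℕ) (I : Fin d → Finset Cell) : Prop :=
  IsPolyomino P ∧ IsSimple P ∧ IsThin P ∧
  J.card = d ∧
  ((IsMaxHInterval P J ∧ ∀ k, IsMaxVInterval P (I k)) ∨
   (IsMaxVInterval P J ∧ ∀ k, IsMaxHInterval P (I k))) ∧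
  (∀ j k, j ≠ k → Disjoint (I j) (I k)) ∧
  (∀ k, ((I k) ∩ J).Nonempty) ∧
  Finset.univ.biUnion I = P

/-- The `k`-th elementary symmetric polynomial of `x 0, …, x (d-1)`. -/
def esymm {R : Type*} [CommRing R] {d : ℕ} (k : ℕ) (x : Fin d → R) : R :=
  ∑ s ∈ Finset.powersetCard k (Finset.univ : Finset (Fin d)), ∏ i ∈ s, x i

/-- `G_P` has an induced matching with `n` edges `{A i, B i}`. -/
def HasInducedMatching (P : Finset Cell) (n : ℕ) : Prop :=
  ∃ A B : Fin n → Cell,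
    (∀ i, Attacks P (A i) (B i)) ∧
    (∀ i j, i ≠ j → A i ≠ A j) ∧
    (∀ i j, i ≠ j → B i ≠ B j) ∧
    (∀ i j, A i ≠ B j) ∧
    (∀ i j, i ≠ j →
      ¬ Attacks P (A i) (A j) ∧ ¬ Attacks P (A i) (B j) ∧ ¬ Attacks P (B i) (B j))

/-- The induced matching number `ν(G_P)`. -/
noncomputable def matchNum (P : Finset Cell) : ℕ := sSup {n | HasInducedMatching P n}

/-- `c` is a single cell of the maximal interval `I`: the maximal interval of `P`
through `c` perpendicular to `I` is `{c}`. -/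
def IsSingleCell (P I : Finset Cell) (c : Cell) : Prop :=
  c ∈ I ∧
  ((IsMaxHInterval P I ∧ ∀ I', IsMaxVInterval P I' → c ∈ I' → I' = {c}) ∨
   (IsMaxVInterval P I ∧ ∀ I', IsMaxHInterval P I' → c ∈ I' → I' = {c}))

/-!
If `P` is not simple, the complement of `P` has a bounded connected component `H`. Let `t` be the
rightmost cell in the top row of `H` and `b` the leftmost cell in its bottom row. The cells `U`
above `t` and `D` below `b` lie in `P`, and each attacks a neighbour of it in `P`. A cell above `H`
and a cell below `H` can only attack each other along a common column, and a column that meets `H`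
is cut by a cell of `H`. So the pairs at `U` and at `D` form an induced `2K₂` in `G_P`, that is an
induced `4`-cycle in `Ḡ_P`, unless the two neighbours share a column that misses `H`. This forces
`t` and `b` into one column, with both neighbours diagonal on the same side; then another
neighbour of `U` or of `D`, or else a pair beside `b` (or beside `t`), gives the `2K₂`.
-/

open Relation

theorem Adjacent.symm {c d : Cell} (h : Adjacent c d) : Adjacent d c := by
  unfold Adjacent at h ⊢
  omega

/-- `IsPolyomino P` and `IsSimple P` say that `P`, respectively its complement, is connected for
this relation. -/
def AdjWithin (S : Set Cell) (c d : Cell) : Prop :=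
  Adjacent c d ∧ c ∈ S ∧ d ∈ S

instance (S : Set Cell) : Std.Symm (AdjWithin S) :=
  ⟨fun _ _ ⟨h, hc, hd⟩ => ⟨h.symm, hd, hc⟩⟩

section Segments

variable {S : Finset Cell} {c d z : Cell}

theorem IsHSeg.snd_eq (hS : IsHSeg S) (hc : c ∈ S) (hd : d ∈ S) : c.2 = d.2 := by
  obtain ⟨y, a, b, -, rfl⟩ := hS
  obtain ⟨_, -, rfl⟩ := Finset.mem_image.1 hc
  obtain ⟨_, -, rfl⟩ := Finset.mem_image.1 hd
  rfl

theorem IsVSeg.fst_eq (hS : IsVSeg S) (hc : c ∈ S) (hd : d ∈ S) : c.1 = d.1 := by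
  obtain ⟨x, a, b, -, rfl⟩ := hS
  obtain ⟨_, -, rfl⟩ := Finset.mem_image.1 hc
  obtain ⟨_, -, rfl⟩ := Finset.mem_image.1 hd
  rfl

theorem IsVSeg.mem_of_between (hS : IsVSeg S) (hc : c ∈ S) (hd : d ∈ S) (hz : z.1 = c.1)
    (hcz : c.2 ≤ z.2) (hzd : z.2 ≤ d.2) : z ∈ S := by
  obtain ⟨x, a, b, -, rfl⟩ := hS
  simp only [Finset.mem_image, Finset.mem_Icc] at hc hd ⊢
  obtain ⟨_, hc, rfl⟩ := hc
  obtain ⟨_, hd, rfl⟩ := hd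
  exact ⟨z.2, by omega, Prod.ext hz.symm rfl⟩

theorem Adjacent.isHSeg_or_isVSeg (h : Adjacent c d) : IsHSeg {c, d} ∨ IsVSeg {c, d} := by
  obtain ⟨c1, c2⟩ := c
  obtain ⟨d1, d2⟩ := d
  unfold Adjacent at h
  dsimp only at h
  rcases h with ⟨rfl, h⟩ | ⟨rfl, h⟩
  · refine .inr ⟨c1, min c2 d2, max c2 d2, min_le_max, ?_⟩
    ext ⟨a, b⟩
    simp
    omega
  · refine .inl ⟨c2, min c1 d1, max c1 d1, min_le_max, ?_⟩
    ext ⟨a, b⟩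
    simp
    omega

theorem exists_maximal_seg_superset {seg : Finset Cell → Prop} {P : Finset Cell} (hS : seg S)
    (hSP : S ⊆ P) :
    ∃ I, (seg I ∧ I ⊆ P ∧ ∀ I', seg I' → I' ⊆ P → I ⊆ I' → I' = I) ∧ S ⊆ I := by
  classical
  obtain ⟨I, hSI, hI, hmax⟩ := (P.powerset.filter seg).exists_le_maximal
    (Finset.mem_filter.2 ⟨Finset.mem_powerset.2 hSP, hS⟩)
  simp only [Finset.mem_filter, Finset.mem_powerset] at hI hmax
  exact ⟨I, ⟨hI.2, hI.1, fun I' h' hP' hII' => le_antisymm (hmax ⟨hP', h'⟩ hII') hII'⟩, hSI⟩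

end Segments

section Attacks

variable {P : Finset Cell} {c d z : Cell}

theorem Attacks.symm (h : Attacks P c d) : Attacks P d c :=
  let ⟨hne, I, hI, hc, hd⟩ := h
  ⟨hne.symm, I, hI, hd, hc⟩

theorem attacks_comm : Attacks P c d ↔ Attacks P d c :=
  ⟨Attacks.symm, Attacks.symm⟩

theorem attacks_of_adjacent (h : Adjacent c d) (hc : c ∈ P) (hd : d ∈ P) : Attacks P c d := by
  have hne : c ≠ d := by
    rintro rfl
    unfold Adjacent at h
    omega
  have hcd : {c, d} ⊆ P := Finset.insert_subset hc (Finset.singleton_subset_iff.2 hd)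
  obtain ⟨I, hI, hsub⟩ : ∃ I, IsMaxInterval P I ∧ {c, d} ⊆ I := by
    rcases h.isHSeg_or_isVSeg with hS | hS
    · obtain ⟨I, hI, hsub⟩ := exists_maximal_seg_superset hS hcd
      exact ⟨I, .inl hI, hsub⟩
    · obtain ⟨I, hI, hsub⟩ := exists_maximal_seg_superset hS hcd
      exact ⟨I, .inr hI, hsub⟩
  exact ⟨hne, I, hI, hsub (by simp), hsub (by simp)⟩

theorem not_attacks_of_fst_ne_of_snd_ne (h1 : c.1 ≠ d.1) (h2 : c.2 ≠ d.2) : ¬Attacks P c d := by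
  rintro ⟨-, I, hI | hI, hc, hd⟩
  · exact h2 (hI.1.snd_eq hc hd)
  · exact h1 (hI.1.fst_eq hc hd)

theorem not_attacks_of_gap (hz : z ∉ P) (hc : c.1 = z.1) (hcz : c.2 < z.2) (hzd : z.2 < d.2) :
    ¬Attacks P c d := by
  rintro ⟨-, I, hI | hI, hcI, hdI⟩
  · have := hI.1.snd_eq hcI hdI
    omega
  · exact hz (hI.2.1 (hI.1.mem_of_between hcI hdI (by omega) hcz.le hzd.le))

def Apart (P : Finset Cell) (c d : Cell) : Prop :=
  c ≠ d ∧ ¬Attacks P c d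

theorem apart_of_fst_ne_of_snd_ne (h1 : c.1 ≠ d.1) (h2 : c.2 ≠ d.2) : Apart P c d :=
  ⟨fun h => h1 (congrArg Prod.fst h), not_attacks_of_fst_ne_of_snd_ne h1 h2⟩

theorem gBar_adj {c d : {c : Cell // c ∈ P}} : (GBar P).Adj c d ↔ Apart P c d := by
  rw [GBar, SimpleGraph.compl_adj, ne_eq, Subtype.ext_iff]
  rfl

theorem not_isChordal_of_two_K2 {a b : Cell} (ha : a ∈ P) (hb : b ∈ P) (hc : c ∈ P) (hd : d ∈ P)
    (hab : Attacks P a b) (hcd : Attacks P c d)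
    (hac : Apart P a c) (had : Apart P a d) (hbc : Apart P b c) (hbd : Apart P b d) :
    ¬IsChordal (GBar P) := by
  intro hch
  have hZ : ∀ i : ZMod 4, i = 0 ∨ i = 1 ∨ i = 2 ∨ i = 3 := by decide
  refine hch 4 le_rfl ⟨by norm_num, ![⟨a, ha⟩, ⟨c, hc⟩, ⟨b, hb⟩, ⟨d, hd⟩], ?_, fun i j => ?_⟩
  · intro i j hij
    rcases hZ i with rfl | rfl | rfl | rfl <;> rcases hZ j with rfl | rfl | rfl | rfl <;>
      simp_all [Apart, Subtype.ext_iff, eq_comm, hab.1, hcd.1]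
  · rw [gBar_adj]
    rcases hZ i with rfl | rfl | rfl | rfl <;> rcases hZ j with rfl | rfl | rfl | rfl <;>
      simp_all +decide [Apart, eq_comm, attacks_comm]

end Attacks

section Paths

variable {S : Set Cell}

theorem reflTransGen_adjWithin_row {y : ℤ} (hS : ∀ x, (x, y) ∈ S) (a b : ℤ) :
    ReflTransGen (AdjWithin S) (a, y) (b, y) :=
  ReflTransGen.lift (fun x => (x, y)) (fun _ _ h => h) _ _ <|
    reflTransGen_of_succ (fun x x' => AdjWithin S (x, y) (x', y))
      (fun _ _ => ⟨by simp [Adjacent], hS _, hS _⟩) (fun _ _ => ⟨by simp [Adjacent], hS _, hS _⟩)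

theorem reflTransGen_adjWithin_col {x : ℤ} (hS : ∀ y, (x, y) ∈ S) (a b : ℤ) :
    ReflTransGen (AdjWithin S) (x, a) (x, b) :=
  ReflTransGen.lift (fun y => (x, y)) (fun _ _ h => h) _ _ <|
    reflTransGen_of_succ (fun y y' => AdjWithin S (x, y) (x, y'))
      (fun _ _ => ⟨by simp [Adjacent], hS _, hS _⟩) (fun _ _ => ⟨by simp [Adjacent], hS _, hS _⟩)

end Paths

theorem exists_abs_coord_lt (P : Finset Cell) : ∃ M : ℤ, ∀ p ∈ P, |p.1| < M ∧ |p.2| < M := by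
  refine ⟨∑ p ∈ P, (|p.1| + |p.2|) + 1, fun p hp => ?_⟩
  have := Finset.single_le_sum (f := fun p : Cell => |p.1| + |p.2|) (fun _ _ => by positivity) hp
  constructor <;> linarith [abs_nonneg p.1, abs_nonneg p.2]

theorem reflTransGen_corner_of_far {P : Finset Cell} {M : ℤ}
    (hM : ∀ p ∈ P, |p.1| < M ∧ |p.2| < M) {z : Cell} (hz : M ≤ |z.1| ∨ M ≤ |z.2|) :
    ReflTransGen (AdjWithin (↑P)ᶜ) z (M, M) := by
  have hcol : ∀ x, M ≤ |x| → ∀ y, ((x, y) : Cell) ∈ (↑P : Set Cell)ᶜ :=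
    fun _ hx _ hp => by linarith [(hM _ hp).1]
  have hrow : ∀ y, M ≤ |y| → ∀ x, ((x, y) : Cell) ∈ (↑P : Set Cell)ᶜ :=
    fun _ hy _ hp => by linarith [(hM _ hp).2]
  rcases hz with hz | hz
  · exact (reflTransGen_adjWithin_col (hcol _ hz) _ M).trans
      (reflTransGen_adjWithin_row (hrow M (le_abs_self M)) _ M)
  · exact (reflTransGen_adjWithin_row (hrow _ hz) _ M).trans
      (reflTransGen_adjWithin_col (hcol M (le_abs_self M)) _ M)

/-- A bounded connected component of the complement of `P`. -/
def IsHole (P H : Finset Cell) : Prop :=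
  IsPolyomino H ∧ Disjoint P H ∧ ∀ z ∈ H, ∀ w, Adjacent z w → w ∉ P → w ∈ H

theorem exists_isHole_of_not_isSimple {P : Finset Cell} (hP : ¬IsSimple P) : ∃ H, IsHole P H := by
  classical
  obtain ⟨M, hM⟩ := exists_abs_coord_lt P
  set R := AdjWithin (↑P : Set Cell)ᶜ
  obtain ⟨h₀, hh₀, hfar⟩ : ∃ h₀ ∉ P, ¬ReflTransGen R h₀ (M, M) := by
    by_contra! h
    exact hP fun c d hc hd => (h c hc).trans (symm (h d hd))
  have hnear : ∀ z, ReflTransGen R h₀ z → |z.1| < M ∧ |z.2| < M := fun z hz => by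
    by_contra hz'
    exact hfar (hz.trans (reflTransGen_corner_of_far hM (by omega)))
  have hout : ∀ z, ReflTransGen R h₀ z → z ∉ P := fun z hz => by
    rcases hz.cases_tail with rfl | ⟨_, _, -, -, hz⟩
    exacts [hh₀, hz]
  set H := (Finset.Icc (-M) M ×ˢ Finset.Icc (-M) M).filter (ReflTransGen R h₀)
  have hH : ∀ z, z ∈ H ↔ ReflTransGen R h₀ z := fun z => by
    simp only [H, Finset.mem_filter, Finset.mem_product, Finset.mem_Icc, and_iff_right_iff_imp]
    intro hz
    have := hnear z hz
    rw [abs_lt, abs_lt] at this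
    omega
  have hpath : ∀ z, ReflTransGen R h₀ z → ReflTransGen (AdjWithin H) h₀ z := fun z hz => by
    induction hz with
    | refl => rfl
    | @tail a b hab hstep ih => exact ih.tail ⟨hstep.1, (hH a).2 hab, (hH b).2 (hab.tail hstep)⟩
  refine ⟨H, ⟨⟨h₀, (hH h₀).2 .refl⟩, fun z hz w hw => ?_⟩, ?_, fun z hz w hzw hw => ?_⟩
  · exact (symm (hpath z ((hH z).1 hz))).trans (hpath w ((hH w).1 hw))
  · exact Finset.disjoint_right.2 fun z hz => hout z ((hH z).1 hz)
  · exact (hH w).2 (((hH z).1 hz).tail ⟨hzw, hout z ((hH z).1 hz), hw⟩)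

theorem IsPolyomino.exists_fst_eq {H : Finset Cell} (hH : IsPolyomino H) {z w : Cell}
    (hz : z ∈ H) (hw : w ∈ H) {x : ℤ} (hzx : z.1 ≤ x) (hxw : x ≤ w.1) : ∃ y ∈ H, y.1 = x := by
  induction hH.2 z hz w hw with
  | refl => exact ⟨z, hz, by omega⟩
  | @tail a b _ hab ih =>
    by_cases hxa : x ≤ a.1
    · exact ih hab.2.1 hxa
    · exact ⟨b, hab.2.2, by unfold Adjacent at hab; omega⟩

theorem IsPolyomino.exists_adjacent_mem {P : Finset Cell} (hP : IsPolyomino P) {c d : Cell}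
    (hc : c ∈ P) (hd : d ∈ P) (hcd : c ≠ d) : ∃ e ∈ P, Adjacent c e := by
  rcases (hP.2 c hc d hd).cases_head with rfl | ⟨e, hce, -⟩
  exacts [absurd rfl hcd, ⟨e, hce.2.2, hce.1⟩]

theorem snd_lt_of_adjacent_above {x y : ℤ} {u : Cell} (h : Adjacent (x, y + 1) u)
    (hu : u ≠ (x, y)) : y < u.2 := by
  unfold Adjacent at h
  rw [Ne, Prod.ext_iff] at hu
  dsimp only at h hu
  omega

theorem snd_lt_of_adjacent_below {x y : ℤ} {d : Cell} (h : Adjacent (x, y - 1) d)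
    (hd : d ≠ (x, y)) : d.2 < y := by
  unfold Adjacent at h
  rw [Ne, Prod.ext_iff] at hd
  dsimp only at h hd
  omega

def IsTopRight (H : Finset Cell) (t : Cell) : Prop :=
  t ∈ H ∧ ∀ z ∈ H, z.2 < t.2 ∨ z.2 = t.2 ∧ z.1 ≤ t.1

def IsBottomLeft (H : Finset Cell) (b : Cell) : Prop :=
  b ∈ H ∧ ∀ z ∈ H, b.2 < z.2 ∨ b.2 = z.2 ∧ b.1 ≤ z.1

section Hole

variable {P H : Finset Cell} {t b : Cell}

theorem IsTopRight.snd_le (ht : IsTopRight H t) {z : Cell} (hz : z ∈ H) : z.2 ≤ t.2 := by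
  rcases ht.2 z hz with h | h <;> omega

theorem IsBottomLeft.le_snd (hb : IsBottomLeft H b) {z : Cell} (hz : z ∈ H) : b.2 ≤ z.2 := by
  rcases hb.2 z hz with h | h <;> omega

theorem IsHole.not_mem (hH : IsHole P H) {z : Cell} (hz : z ∈ H) : z ∉ P :=
  Finset.disjoint_right.1 hH.2.1 hz

theorem IsHole.mem_of_adjacent (hH : IsHole P H) {z w : Cell} (hz : z ∈ H) (hzw : Adjacent z w)
    (hw : w ∉ H) : w ∈ P := by
  by_contra h
  exact hw (hH.2.2 z hz w hzw h)

theorem IsHole.apart_of_between_rows (hH : IsHole P H) {p q : Cell} (hp : ∀ z ∈ H, z.2 < p.2)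
    (hq : ∀ z ∈ H, q.2 < z.2) (hcol : p.1 = q.1 → ∃ z ∈ H, z.1 = p.1) : Apart P p q := by
  obtain ⟨z₀, hz₀⟩ := hH.1.1
  have hrow : q.2 < p.2 := (hq z₀ hz₀).trans (hp z₀ hz₀)
  by_cases hpq : p.1 = q.1
  · obtain ⟨z, hz, hzp⟩ := hcol hpq
    exact ⟨fun h => hrow.ne' (congrArg Prod.snd h), fun h => not_attacks_of_gap (hH.not_mem hz)
      (hpq.symm.trans hzp.symm) (hq z hz) (hp z hz) h.symm⟩
  · exact apart_of_fst_ne_of_snd_ne hpq hrow.ne'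

theorem IsHole.above_mem (hH : IsHole P H) (ht : IsTopRight H t) : (t.1, t.2 + 1) ∈ P :=
  hH.mem_of_adjacent ht.1 (by simp [Adjacent]) fun h => by
    have := ht.2 _ h
    dsimp only at this
    omega

theorem IsHole.right_mem (hH : IsHole P H) (ht : IsTopRight H t) : (t.1 + 1, t.2) ∈ P :=
  hH.mem_of_adjacent ht.1 (by simp [Adjacent]) fun h => by
    have := ht.2 _ h
    dsimp only at this
    omega

theorem IsHole.below_mem (hH : IsHole P H) (hb : IsBottomLeft H b) : (b.1, b.2 - 1) ∈ P :=
  hH.mem_of_adjacent hb.1 (by simp [Adjacent]) fun h => by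
    have := hb.2 _ h
    dsimp only at this
    omega

theorem IsHole.left_mem (hH : IsHole P H) (hb : IsBottomLeft H b) : (b.1 - 1, b.2) ∈ P :=
  hH.mem_of_adjacent hb.1 (by simp [Adjacent]) fun h => by
    have := hb.2 _ h
    dsimp only at this
    omega

theorem IsHole.not_isChordal_of_partners (hH : IsHole P H) (ht : IsTopRight H t)
    (hb : IsBottomLeft H b) {u d : Cell} (hu : u ∈ P) (htu : Adjacent (t.1, t.2 + 1) u)
    (hd : d ∈ P) (hbd : Adjacent (b.1, b.2 - 1) d) (hcol : u.1 = d.1 → ∃ z ∈ H, z.1 = u.1) :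
    ¬IsChordal (GBar P) := by
  have hut : u ≠ t := fun h => hH.not_mem ht.1 (h ▸ hu)
  have hdb : d ≠ b := fun h => hH.not_mem hb.1 (h ▸ hd)
  have hu₂ : t.2 < u.2 := snd_lt_of_adjacent_above htu hut
  have hd₂ : d.2 < b.2 := snd_lt_of_adjacent_below hbd hdb
  have above : ∀ p : Cell, t.2 < p.2 → ∀ z ∈ H, z.2 < p.2 :=
    fun _ hp _ hz => (ht.snd_le hz).trans_lt hp
  have below : ∀ q : Cell, q.2 < b.2 → ∀ z ∈ H, q.2 < z.2 :=
    fun _ hq _ hz => hq.trans_le (hb.le_snd hz)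
  have hU := hH.above_mem ht
  have hD := hH.below_mem hb
  exact not_isChordal_of_two_K2 hU hu hD hd (attacks_of_adjacent htu hU hu)
    (attacks_of_adjacent hbd hD hd)
    (hH.apart_of_between_rows (above _ (lt_add_one _)) (below _ (sub_one_lt _))
      fun _ => ⟨t, ht.1, rfl⟩)
    (hH.apart_of_between_rows (above _ (lt_add_one _)) (below _ hd₂) fun _ => ⟨t, ht.1, rfl⟩)
    (hH.apart_of_between_rows (above _ hu₂) (below _ (sub_one_lt _)) fun h => ⟨b, hb.1, h.symm⟩)
    (hH.apart_of_between_rows (above _ hu₂) (below _ hd₂) hcol)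

theorem IsHole.not_isChordal_of_corner_right (hP : IsPolyomino P) (hH : IsHole P H)
    (ht : IsTopRight H t) (hb : IsBottomLeft H b) (htb : t.1 = b.1)
    (hUR : (t.1 + 1, t.2 + 1) ∈ P) (hUL : (t.1 - 1, t.2 + 1) ∉ P)
    (hDL : (b.1 - 1, b.2 - 1) ∉ P) : ¬IsChordal (GBar P) := by
  have hU := hH.above_mem ht
  have hL := hH.left_mem hb
  have hbt : b.2 ≤ t.2 := ht.snd_le hb.1
  obtain ⟨l, hl, hLl⟩ := hP.exists_adjacent_mem hL hU (by simp [Prod.ext_iff]; omega)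
  have hlb : l ≠ b := fun h => hH.not_mem hb.1 (h ▸ hl)
  have hlDL : l ≠ (b.1 - 1, b.2 - 1) := fun h => hDL (h ▸ hl)
  have hlUL : l ≠ (t.1 - 1, t.2 + 1) := fun h => hUL (h ▸ hl)
  unfold Adjacent at hLl
  rw [Ne, Prod.ext_iff] at hlb hlDL hlUL
  dsimp only at hLl hlDL hlUL
  exact not_isChordal_of_two_K2 hU hUR hL hl (attacks_of_adjacent (by simp [Adjacent]) hU hUR)
    (attacks_of_adjacent (by unfold Adjacent; omega) hL hl)
    (apart_of_fst_ne_of_snd_ne (by omega) (by omega))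
    (apart_of_fst_ne_of_snd_ne (by omega) (by omega))
    (apart_of_fst_ne_of_snd_ne (by omega) (by omega))
    (apart_of_fst_ne_of_snd_ne (by omega) (by omega))

theorem IsHole.not_isChordal_of_corner_left (hP : IsPolyomino P) (hH : IsHole P H)
    (ht : IsTopRight H t) (hb : IsBottomLeft H b) (htb : t.1 = b.1)
    (hDL : (b.1 - 1, b.2 - 1) ∈ P) (hDR : (b.1 + 1, b.2 - 1) ∉ P)
    (hUR : (t.1 + 1, t.2 + 1) ∉ P) : ¬IsChordal (GBar P) := by
  have hD := hH.below_mem hb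
  have hR := hH.right_mem ht
  have hbt : b.2 ≤ t.2 := ht.snd_le hb.1
  obtain ⟨r, hr, hRr⟩ := hP.exists_adjacent_mem hR hD (by simp [Prod.ext_iff]; omega)
  have hrt : r ≠ t := fun h => hH.not_mem ht.1 (h ▸ hr)
  have hrUR : r ≠ (t.1 + 1, t.2 + 1) := fun h => hUR (h ▸ hr)
  have hrDR : r ≠ (b.1 + 1, b.2 - 1) := fun h => hDR (h ▸ hr)
  unfold Adjacent at hRr
  rw [Ne, Prod.ext_iff] at hrt hrUR hrDR
  dsimp only at hRr hrUR hrDR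
  exact not_isChordal_of_two_K2 hD hDL hR hr (attacks_of_adjacent (by simp [Adjacent]) hD hDL)
    (attacks_of_adjacent (by unfold Adjacent; omega) hR hr)
    (apart_of_fst_ne_of_snd_ne (by omega) (by omega))
    (apart_of_fst_ne_of_snd_ne (by omega) (by omega))
    (apart_of_fst_ne_of_snd_ne (by omega) (by omega))
    (apart_of_fst_ne_of_snd_ne (by omega) (by omega))

theorem IsHole.partners_at_corner (hH : IsHole P H) (ht : IsTopRight H t) (hb : IsBottomLeft H b)
    {u d : Cell} (hu : u ∈ P) (htu : Adjacent (t.1, t.2 + 1) u) (hd : d ∈ P)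
    (hbd : Adjacent (b.1, b.2 - 1) d) (hud : u.1 = d.1) (hno : ∀ z ∈ H, z.1 ≠ u.1) :
    t.1 = b.1 ∧ (u = (t.1 + 1, t.2 + 1) ∧ d = (b.1 + 1, b.2 - 1) ∨
      u = (t.1 - 1, t.2 + 1) ∧ d = (b.1 - 1, b.2 - 1)) := by
  have hgap : u.1 < min t.1 b.1 ∨ max t.1 b.1 < u.1 := by
    by_contra! h
    obtain ⟨z, hz, hzu⟩ := if htb : t.1 ≤ b.1
      then hH.1.exists_fst_eq (x := u.1) ht.1 hb.1 (by omega) (by omega)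
      else hH.1.exists_fst_eq (x := u.1) hb.1 ht.1 (by omega) (by omega)
    exact hno z hz hzu
  have hut : u ≠ t := fun h => hH.not_mem ht.1 (h ▸ hu)
  have hdb : d ≠ b := fun h => hH.not_mem hb.1 (h ▸ hd)
  unfold Adjacent at htu hbd
  rw [Ne, Prod.ext_iff] at hut hdb
  simp only [Prod.ext_iff]
  dsimp only at htu hbd
  omega

theorem IsHole.not_isChordal_of_extremal (hP : IsPolyomino P) (hH : IsHole P H)
    (ht : IsTopRight H t) (hb : IsBottomLeft H b) : ¬IsChordal (GBar P) := by
  have hU := hH.above_mem ht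
  have hD := hH.below_mem hb
  have hUD : ((t.1, t.2 + 1) : Cell) ≠ (b.1, b.2 - 1) := by
    have := ht.snd_le hb.1
    simp only [Ne, Prod.ext_iff]
    omega
  obtain ⟨u, hu, hUu⟩ := hP.exists_adjacent_mem hU hD hUD
  obtain ⟨d, hd, hDd⟩ := hP.exists_adjacent_mem hD hU hUD.symm
  by_cases hcol : u.1 = d.1 → ∃ z ∈ H, z.1 = u.1
  · exact hH.not_isChordal_of_partners ht hb hu hUu hd hDd hcol
  push Not at hcol
  obtain ⟨htb, ⟨rfl, rfl⟩ | ⟨rfl, rfl⟩⟩ := hH.partners_at_corner ht hb hu hUu hd hDd hcol.1 hcol.2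
  · by_cases hUL : ((t.1 - 1, t.2 + 1) : Cell) ∈ P
    · exact hH.not_isChordal_of_partners ht hb hUL (by simp [Adjacent]) hd hDd
        fun h => absurd h (by dsimp only; omega)
    by_cases hDL : ((b.1 - 1, b.2 - 1) : Cell) ∈ P
    · exact hH.not_isChordal_of_partners ht hb hu hUu hDL (by simp [Adjacent])
        fun h => absurd h (by dsimp only; omega)
    exact hH.not_isChordal_of_corner_right hP ht hb htb hu hUL hDL
  · by_cases hUR : ((t.1 + 1, t.2 + 1) : Cell) ∈ P
    · exact hH.not_isChordal_of_partners ht hb hUR (by simp [Adjacent]) hd hDd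
        fun h => absurd h (by dsimp only; omega)
    by_cases hDR : ((b.1 + 1, b.2 - 1) : Cell) ∈ P
    · exact hH.not_isChordal_of_partners ht hb hu hUu hDR (by simp [Adjacent])
        fun h => absurd h (by dsimp only; omega)
    exact hH.not_isChordal_of_corner_left hP ht hb htb hd hDR hUR

theorem IsHole.not_isChordal (hP : IsPolyomino P) (hH : IsHole P H) : ¬IsChordal (GBar P) := by
  obtain ⟨t, ht, htmax⟩ := H.exists_max_image (fun z => toLex (z.2, z.1)) hH.1.1
  obtain ⟨b, hb, hbmin⟩ := H.exists_min_image (fun z => toLex (z.2, z.1)) hH.1.1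
  refine hH.not_isChordal_of_extremal hP ⟨ht, fun z hz => ?_⟩ ⟨hb, fun z hz => ?_⟩
  · simpa [Prod.Lex.toLex_le_toLex] using htmax z hz
  · simpa [Prod.Lex.toLex_le_toLex] using hbmin z hz

end Hole

/-- If `Ḡ_P` is chordal, then `P` is simple. -/
theorem statement9 (P : Finset Cell) (hP : IsPolyomino P)
    (hch : IsChordal (GBar P)) : IsSimple P := by
  by_contra hs
  obtain ⟨H, hH⟩ := exists_isHole_of_not_isSimple hs
  exact hH.not_isChordal hP hch
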